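/- arXiv:1601.03693 — 3 statements merged into one kernel-verified Lean document; each statement's English description precedes it below -/
import Mathlib

section
/- Let (G, G_•) be a filtered group and for each upper face F(v) = {u ∈ {0,1}^n : supp(u) ⊇ supp(v)} and g ∈ G let g^{F(v)} denote the map equal to g on F(v) and the identity elsewhere. Then an element q ∈ G^{{0,1}^n} lies in the subgroup C^n(G_•) generated by the face groups if and only if q admits a unique factorization q = g_0^{F_0} g_1^{F_1} ⋯ g_{2^n−1}^{F_{2^n−1}}, where F_0 < F_1 < ⋯ < F_{2^n−1} are the upper faces of {0,1}^n ordered by the colex order of their defining vertices and g_i ∈ G_{codim(F_i)} for each i. -/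
open Finset

/-- Embedding of the discrete cube `{0,1}^n` into `ℤ^n`. -/
def cubeEmb {n : ℕ} (v : Fin n → Bool) : Fin n → ℤ := fun i => if v i then 1 else 0

/-- A discrete-cube morphism: the restriction to `{0,1}^m` of an affine
homomorphism `ℤ^m → ℤ^n`. -/
def IsCubeMorphism {m n : ℕ} (φ : (Fin m → Bool) → (Fin n → Bool)) : Prop :=
  ∃ (M : (Fin m → ℤ) →+ (Fin n → ℤ)) (t : Fin n → ℤ),
    ∀ v : Fin m → Bool, cubeEmb (φ v) = M (cubeEmb v) + t

/-- A face of `{0,1}^n` of codimension `c`: fix `c` coordinates. -/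
def IsFaceOfCodim {n : ℕ} (F : Set (Fin n → Bool)) (c : ℕ) : Prop :=
  ∃ (I : Finset (Fin n)) (x : Fin n → Bool), I.card = c ∧
    F = {v : Fin n → Bool | ∀ i ∈ I, v i = x i}

/-- An `m`-face map into `{0,1}^n`: an injective cube morphism whose image is
an `m`-dimensional face. -/
def IsFaceMap {m n : ℕ} (φ : (Fin m → Bool) → (Fin n → Bool)) : Prop :=
  IsCubeMorphism φ ∧ Function.Injective φ ∧ IsFaceOfCodim (Set.range φ) (n - m)

/-- The number of coordinates of `v` equal to `1`. -/
def weight {n : ℕ} (v : Fin n → Bool) : ℕ := (Finset.univ.filter fun i => v i = true).card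

/-- A (pre)filtration on a group: a decreasing chain of subgroups with
`[G_i, G_j] ⊆ G_{i+j}`. -/
def IsFiltrationOfGroup {G : Type*} [Group G] (Gf : ℕ → Subgroup G) : Prop :=
  (∀ i, Gf (i + 1) ≤ Gf i) ∧
  (∀ i j : ℕ, ∀ x ∈ Gf i, ∀ y ∈ Gf j, x⁻¹ * y⁻¹ * x * y ∈ Gf (i + j))

open Classical in
/-- The face-group element `g^F`: equal to `g` on `F` and to the identity elsewhere. -/
noncomputable def faceEl {G : Type*} [Group G] {n : ℕ} (F : Set (Fin n → Bool)) (g : G) :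
    (Fin n → Bool) → G :=
  fun v => if v ∈ F then g else 1

/-- The Host–Kra cube group `C^n(G_•)`: the subgroup of `G^{{0,1}^n}` generated by
the face groups. -/
noncomputable def hkCubes {G : Type*} [Group G] (Gf : ℕ → Subgroup G) (n : ℕ) :
    Subgroup ((Fin n → Bool) → G) :=
  Subgroup.closure { f | ∃ (c : ℕ) (F : Set (Fin n → Bool)) (g : G),
    IsFaceOfCodim F c ∧ g ∈ Gf c ∧ f = faceEl F g }

/-- Restriction of a map on `{0,1}^{n+1}` to the lower face `{v : v_j = 0}`,
viewed as a map on `{0,1}^n`. -/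
def lowerFaceRestr {X : Type*} {n : ℕ} (q : (Fin (n + 1) → Bool) → X) (j : Fin (n + 1)) :
    (Fin n → Bool) → X :=
  fun v => q (j.insertNth false v)

/-- An `(n+1)`-corner: every restriction to an `n`-face containing `0^{n+1}` is a cube. -/
def IsNSCorner {X : Type*} (C : ∀ n, ((Fin n → Bool) → X) → Prop) (n : ℕ)
    (q' : (Fin (n + 1) → Bool) → X) : Prop :=
  ∀ j : Fin (n + 1), C n (lowerFaceRestr q' j)

/-- `q` is a completion of the corner `q'`. -/
def IsNSCompletion {X : Type*} (C : ∀ n, ((Fin n → Bool) → X) → Prop) (n : ℕ)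
    (q' q : (Fin (n + 1) → Bool) → X) : Prop :=
  C (n + 1) q ∧ ∀ v : Fin (n + 1) → Bool, v ≠ (fun _ => true) → q v = q' v

/-- The nilspace axioms: composition, ergodicity and corner completion. -/
def IsNilspace {X : Type*} (C : ∀ n, ((Fin n → Bool) → X) → Prop) : Prop :=
  (∀ (m n : ℕ) (φ : (Fin m → Bool) → (Fin n → Bool)), IsCubeMorphism φ →
      ∀ q, C n q → C m (q ∘ φ)) ∧
  (∀ q : (Fin 1 → Bool) → X, C 1 q) ∧
  (∀ n (q' : (Fin (n + 1) → Bool) → X), IsNSCorner C n q' → ∃ q, IsNSCompletion C n q' q)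

/-- A `k`-step nilspace: a nilspace in which every `(k+1)`-corner has a unique
completion. -/
def IsKStepNilspace {X : Type*} (C : ∀ n, ((Fin n → Bool) → X) → Prop) (k : ℕ) : Prop :=
  IsNilspace C ∧
  ∀ q' : (Fin (k + 1) → Bool) → X, IsNSCorner C k q' → ∃! q, IsNSCompletion C k q' q

/-- The Gray-code alternating product `σ_n`. -/
def graySigma {G : Type*} [Group G] : (n : ℕ) → ((Fin n → Bool) → G) → G
  | 0, g => g (fun i => i.elim0)
  | n + 1, g => (graySigma n (fun v => g (Fin.snoc v true)))⁻¹ *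
      graySigma n (fun v => g (Fin.snoc v false))

/-- The difference operator `∂_h g (x) = g(x)⁻¹ g(xh)`. -/
def mulDiff {H G : Type*} [Group H] [Group G] (h : H) (g : H → G) : H → G :=
  fun x => (g x)⁻¹ * g (x * h)

/-- `g : H → G` is a polynomial map adapted to the filtrations `H_•, G_•`. -/
def IsPolyMap {H G : Type*} [Group H] [Group G] (Hf : ℕ → Subgroup H)
    (Gf : ℕ → Subgroup G) (g : H → G) : Prop :=
  ∀ (n : ℕ) (d : Fin n → ℕ) (h : Fin n → H), (∀ j, h j ∈ Hf (d j)) →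
    ∀ x : H, ((List.ofFn h).foldr mulDiff g) x ∈ Gf (∑ j, d j)

/-- The `k`-arrow `⟨q_0, q_1⟩_k : {0,1}^{n+k} → X`. -/
def arrowMap {X : Type*} {n k : ℕ} (q0 q1 : (Fin n → Bool) → X) :
    (Fin (n + k) → Bool) → X :=
  fun v =>
    if ∀ j : Fin k, v (Fin.natAdd n j) = true
    then q1 (fun i => v (Fin.castAdd k i))
    else q0 (fun i => v (Fin.castAdd k i))

/-- The vertex of `{0,1}^n` whose coordinates are the binary digits of `j`
(so that increasing `j` is the colex order). -/
def vtxOf {n : ℕ} (j : Fin (2 ^ n)) : Fin n → Bool := fun i => Nat.testBit j.1 i.1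

/-- The upper face `F(v) = {u : supp(u) ⊇ supp(v)}`. -/
def upperFaceSet {n : ℕ} (v : Fin n → Bool) : Set (Fin n → Bool) :=
  {u | ∀ i, v i = true → u i = true}


/-!
Write `v_0 < v_1 < ⋯` for the vertices in colex order. Pointwise,
`[x^{F(v)}, y^{F(w)}] = [x, y]^{F(v ∨ w)}`, and `v ∨ w` comes no earlier than `v`; so commuting
a factor past another only creates a correction on a later upper face, and the filtration
property puts its value in the right `G_{|v ∨ w|}`. Hence the ordered products form a subgroup.
It contains every face group, since a face with some coordinates fixed to `0` is, by
inclusion–exclusion in one coordinate at a time, a difference of faces with fewer such coordinates.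
Uniqueness: no later upper face contains `v_0`, so evaluating at `v_0` reads off the first
factor; cancel it and continue.
-/

theorem iSup_fin_succ {α : Type*} [CompleteLattice α] {N : ℕ} (f : Fin (N + 1) → α) :
    ⨆ i, f i = f 0 ⊔ ⨆ i : Fin N, f i.succ :=
  le_antisymm
    (iSup_le <| Fin.cases le_sup_left fun i => le_sup_of_le_right (le_iSup_of_le i le_rfl))
    (sup_le (le_iSup f 0) (iSup_le fun i => le_iSup f i.succ))

section OrderedProduct

variable {H : Type*} [Group H]

def orderedProdSet {N : ℕ} (A : Fin N → Subgroup H) : Set H :=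
  {x | ∃ a : Fin N → H, (∀ i, a i ∈ A i) ∧ (List.ofFn a).prod = x}

theorem orderedProdSet_zero (A : Fin 0 → Subgroup H) : orderedProdSet A = {1} := by
  ext x
  simp [orderedProdSet, eq_comm]

open Pointwise in
theorem orderedProdSet_succ {N : ℕ} (A : Fin (N + 1) → Subgroup H) :
    orderedProdSet A = (A 0 : Set H) * orderedProdSet fun i => A i.succ := by
  ext x
  simp only [orderedProdSet, Set.mem_ofPred_eq, Set.mem_mul, List.ofFn_succ, List.prod_cons]
  constructor
  · rintro ⟨a, ha, rfl⟩
    exact ⟨a 0, ha 0, _, ⟨fun i => a i.succ, fun i => ha i.succ, rfl⟩, rfl⟩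
  · rintro ⟨a₀, ha₀, _, ⟨a, ha, rfl⟩, rfl⟩
    exact ⟨Fin.cons a₀ a, Fin.cases ha₀ ha, by simp⟩

theorem le_normalizer_of_conj_mem {B K : Subgroup H} (h : ∀ b ∈ B, ∀ x ∈ K, b⁻¹ * x * b ∈ K) :
    B ≤ Subgroup.normalizer (K : Set H) := fun b hb =>
  Subgroup.mem_normalizer_iff''.2 fun x =>
    ⟨h b hb x, fun hx => by simpa [mul_assoc] using h b⁻¹ (inv_mem hb) _ hx⟩

/-- Commuting an element of `A i` past anything only creates an error term in a later `A k`,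
so every word in the `A i` can be sorted into an ordered product. -/
theorem coe_iSup_eq_orderedProdSet {N : ℕ} (A : Fin N → Subgroup H)
    (hA : ∀ i j, ∀ a ∈ A i, ∀ b ∈ A j, ∃ k, i ≤ k ∧ a⁻¹ * b⁻¹ * a * b ∈ A k) :
    ((⨆ i, A i : Subgroup H) : Set H) = orderedProdSet A := by
  induction N with
  | zero => simp [orderedProdSet_zero, iSup_of_empty]
  | succ N ih =>
    have succ_of_le {i : Fin N} {k : Fin (N + 1)} (h : i.succ ≤ k) :
        ∃ k', k = k'.succ ∧ i ≤ k' := by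
      obtain ⟨k', rfl⟩ := Fin.exists_succ_eq.2 (Fin.ne_of_gt (lt_of_lt_of_le (Fin.succ_pos i) h))
      exact ⟨k', rfl, Fin.succ_le_succ_iff.1 h⟩
    have hA_tail : ∀ i j : Fin N, ∀ a ∈ A i.succ, ∀ b ∈ A j.succ,
        ∃ k, i ≤ k ∧ a⁻¹ * b⁻¹ * a * b ∈ A k.succ := by
      intro i j a ha b hb
      obtain ⟨k, hik, hk⟩ := hA _ _ a ha b hb
      obtain ⟨k', rfl, hik'⟩ := succ_of_le hik
      exact ⟨k', hik', hk⟩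
    have hnorm : A 0 ≤ Subgroup.normalizer ((⨆ i : Fin N, A i.succ : Subgroup H) : Set H) := by
      refine le_normalizer_of_conj_mem fun b hb x hx => ?_
      induction hx using Subgroup.iSup_induction' with
      | hp j a ha =>
        obtain ⟨k, hjk, hk⟩ := hA _ _ a ha b hb
        obtain ⟨k', rfl, -⟩ := succ_of_le hjk
        have hconj : b⁻¹ * a * b = a * (a⁻¹ * b⁻¹ * a * b) := by group
        rw [hconj]
        exact mul_mem (Subgroup.mem_iSup_of_mem j ha) (Subgroup.mem_iSup_of_mem k' hk)
      | h1 => simp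
      | hmul x y _ _ hx hy =>
        have hconj : b⁻¹ * (x * y) * b = (b⁻¹ * x * b) * (b⁻¹ * y * b) := by group
        rw [hconj]
        exact mul_mem hx hy
    rw [iSup_fin_succ, Subgroup.coe_mul_of_left_le_normalizer_right _ _ hnorm,
      ih _ hA_tail, orderedProdSet_succ]

end OrderedProduct

section FaceElements

variable {G : Type*} [Group G] {n : ℕ}

noncomputable def faceElHom (F : Set (Fin n → Bool)) : G →* (Fin n → Bool) → G where
  toFun := faceEl F
  map_one' := by funext v; simp [faceEl]
  map_mul' a b := by funext v; by_cases h : v ∈ F <;> simp [faceEl, h]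

theorem faceEl_commutator (F F' : Set (Fin n → Bool)) (a b : G) :
    (faceEl F a)⁻¹ * (faceEl F' b)⁻¹ * faceEl F a * faceEl F' b =
      faceEl (F ∩ F') (a⁻¹ * b⁻¹ * a * b) := by
  funext v
  by_cases h : v ∈ F <;> by_cases h' : v ∈ F' <;> simp [faceEl, h, h']

theorem faceEl_diff {F F' : Set (Fin n → Bool)} (h : F' ⊆ F) (a : G) :
    faceEl (F \ F') a = faceEl F a * (faceEl F' a)⁻¹ := by
  funext v
  by_cases hv : v ∈ F'
  · simp [faceEl, hv, h hv]
  · simp only [faceEl, Pi.mul_apply, Pi.inv_apply, if_neg hv, inv_one, mul_one]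
    split_ifs <;> simp_all

theorem list_prod_faceEl_apply_eq_one {N : ℕ} {F : Fin N → Set (Fin n → Bool)} (f : Fin N → G)
    {u : Fin n → Bool} (hu : ∀ j, u ∉ F j) :
    (List.ofFn fun j => faceEl (F j) (f j)).prod u = 1 := by
  rw [Pi.list_prod_apply, List.map_ofFn]
  exact List.prod_eq_one (by simp [faceEl, hu])

/-- Evaluating at `x 0` reads off the first factor, which can then be cancelled. -/
theorem list_prod_faceEl_injective {N : ℕ} {F : Fin N → Set (Fin n → Bool)}
    {x : Fin N → Fin n → Bool} (hx : ∀ j, x j ∈ F j) (hxF : ∀ j k, j < k → x j ∉ F k) :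
    Function.Injective fun f : Fin N → G => (List.ofFn fun j => faceEl (F j) (f j)).prod := by
  induction N with
  | zero => exact fun f f' _ => funext fun j => j.elim0
  | succ N ih =>
    intro f f' h
    simp only [List.ofFn_succ, List.prod_cons] at h
    have tail_apply (f : Fin (N + 1) → G) :
        (List.ofFn fun j : Fin N => faceEl (F j.succ) (f j.succ)).prod (x 0) = 1 :=
      list_prod_faceEl_apply_eq_one _ fun j => hxF 0 j.succ (Fin.succ_pos j)
    have head : f 0 = f' 0 := by
      simpa [faceEl, hx 0, tail_apply] using congrFun h (x 0)
    rw [head, mul_right_inj] at h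
    have tail := ih (fun j => hx j.succ)
      (fun j k hjk => hxF j.succ k.succ (Fin.succ_lt_succ_iff.2 hjk)) h
    exact funext (Fin.cases head (congrFun tail))

end FaceElements

section Cube

variable {n : ℕ}

theorem upperFaceSet_eq_Ici (v : Fin n → Bool) : upperFaceSet v = Set.Ici v := by
  ext u
  simp [upperFaceSet, Pi.le_def, Bool.le_iff_imp]

theorem weight_sup_le (v w : Fin n → Bool) : weight (v ⊔ w) ≤ weight v + weight w := by
  unfold weight
  calc _ = #(filter (fun i => v i = true) univ ∪ filter (fun i => w i = true) univ) := by
        rw [← filter_or]; simp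
    _ ≤ _ := card_union_le _ _

theorem weight_indicator (I : Finset (Fin n)) : weight (fun i => decide (i ∈ I)) = #I := by
  simp [weight]

theorem le_of_vtxOf_le {a b : Fin (2 ^ n)} (h : vtxOf a ≤ vtxOf b) : a ≤ b := by
  refine Fin.le_iff_val_le_val.2 (Nat.le_of_testBit fun i hi => ?_)
  by_cases hin : i < n
  · exact Bool.le_iff_imp.1 (h ⟨i, hin⟩) hi
  · rw [Nat.testBit_lt_two_pow (a.2.trans_le (Nat.pow_le_pow_right two_pos (not_lt.1 hin)))] at hi
    contradiction

theorem vtxOf_bijective : Function.Bijective (vtxOf (n := n)) :=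
  (Fintype.bijective_iff_injective_and_card _).2
    ⟨fun _ _ h => le_antisymm (le_of_vtxOf_le h.le) (le_of_vtxOf_le h.ge), by simp⟩

noncomputable def vtxEquiv : Fin (2 ^ n) ≃ (Fin n → Bool) :=
  Equiv.ofBijective _ vtxOf_bijective

theorem vtxOf_vtxEquiv_symm (v : Fin n → Bool) : vtxOf (vtxEquiv.symm v) = v :=
  Equiv.ofBijective_apply_symm_apply _ _ v

theorem face_eq_upperFaceSet {I : Finset (Fin n)} {x : Fin n → Bool} (hx : ∀ i ∈ I, x i = true) :
    {v : Fin n → Bool | ∀ i ∈ I, v i = x i} = upperFaceSet fun i => decide (i ∈ I) := by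
  ext v
  simp only [upperFaceSet, Set.mem_ofPred_eq, decide_eq_true_eq]
  exact forall₂_congr fun i hi => by rw [hx i hi]

theorem face_eq_diff {I : Finset (Fin n)} {x : Fin n → Bool} {i₀ : Fin n} (hi₀ : i₀ ∈ I)
    (hx : x i₀ = false) :
    {v : Fin n → Bool | ∀ i ∈ I, v i = x i} =
      {v | ∀ i ∈ I.erase i₀, v i = x i} \ {v | ∀ i ∈ I, v i = Function.update x i₀ true i} := by
  ext v
  simp only [Set.mem_ofPred_eq, Set.mem_sdiff, Finset.mem_erase]
  constructor
  · intro hv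
    refine ⟨fun i hi => hv i hi.2, fun hv' => ?_⟩
    simpa [hv i₀ hi₀, hx] using hv' i₀ hi₀
  · rintro ⟨hv, hv'⟩ i hi
    by_cases hi' : i = i₀
    · subst hi'
      refine hx ▸ Bool.eq_false_iff.2 fun hvi => hv' fun j hj => ?_
      by_cases hj' : j = i
      · simp [hj', hvi]
      · rw [Function.update_of_ne hj']; exact hv j ⟨hj', hj⟩
    · exact hv i ⟨hi', hi⟩

theorem face_update_subset_erase (I : Finset (Fin n)) (x : Fin n → Bool) (i₀ : Fin n) (b : Bool) :
    {v : Fin n → Bool | ∀ i ∈ I, v i = Function.update x i₀ b i} ⊆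
      {v | ∀ i ∈ I.erase i₀, v i = x i} := fun v hv i hi => by
  rw [hv i (mem_of_mem_erase hi), Function.update_of_ne (ne_of_mem_erase hi)]

end Cube

section CubeGroup

variable {G : Type*} [Group G] {n : ℕ} {Gf : ℕ → Subgroup G}

theorem IsFiltrationOfGroup.antitone (hGf : IsFiltrationOfGroup Gf) : Antitone Gf :=
  antitone_nat_of_succ_le hGf.1

theorem faceEl_mem_of_upperFace_mem (hGf : Antitone Gf) {K : Subgroup ((Fin n → Bool) → G)}
    (hK : ∀ v, ∀ g ∈ Gf (weight v), faceEl (upperFaceSet v) g ∈ K)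
    (I : Finset (Fin n)) (x : Fin n → Bool) {g : G} (hg : g ∈ Gf #I) :
    faceEl {v | ∀ i ∈ I, v i = x i} g ∈ K := by
  obtain ⟨k, hk⟩ : ∃ k, #{i ∈ I | x i = false} = k := ⟨_, rfl⟩
  induction k generalizing I x with
  | zero =>
    have hx : ∀ i ∈ I, x i = true := fun i hi => by
      simpa using Finset.filter_eq_empty_iff.1 (Finset.card_eq_zero.1 hk) hi
    rw [face_eq_upperFaceSet hx]
    exact hK _ _ ((weight_indicator I).symm ▸ hg)
  | succ k ih =>
    obtain ⟨i₀, hi₀⟩ := Finset.card_pos.1 (by rw [hk]; exact k.succ_pos)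
    obtain ⟨hi₀I, hxi₀⟩ := Finset.mem_filter.1 hi₀
    have hzeros :
        {i ∈ I | Function.update x i₀ true i = false} = {i ∈ I | x i = false}.erase i₀ := by
      ext i
      by_cases hi : i = i₀ <;> simp [hi]
    rw [face_eq_diff hi₀I hxi₀, faceEl_diff (face_update_subset_erase I x i₀ true)]
    refine mul_mem (ih _ _ (hGf card_erase_le hg) ?_) (inv_mem (ih _ _ hg ?_))
    · rw [filter_erase, card_erase_of_mem hi₀, hk, Nat.add_sub_cancel]
    · rw [hzeros, card_erase_of_mem hi₀, hk, Nat.add_sub_cancel]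

theorem upperFaceSet_isFaceOfCodim (v : Fin n → Bool) :
    IsFaceOfCodim (upperFaceSet v) (weight v) :=
  ⟨univ.filter (v · = true), fun _ => true, rfl, by ext u; simp [upperFaceSet]⟩

variable (Gf) in
noncomputable def upperFaceSubgroup (v : Fin n → Bool) : Subgroup ((Fin n → Bool) → G) :=
  (Gf (weight v)).map (faceElHom (upperFaceSet v))

theorem mem_upperFaceSubgroup {v : Fin n → Bool} {a : (Fin n → Bool) → G} :
    a ∈ upperFaceSubgroup Gf v ↔ ∃ g ∈ Gf (weight v), faceEl (upperFaceSet v) g = a :=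
  Subgroup.mem_map

theorem faceEl_mem_upperFaceSubgroup {v : Fin n → Bool} {g : G} (hg : g ∈ Gf (weight v)) :
    faceEl (upperFaceSet v) g ∈ upperFaceSubgroup Gf v :=
  Subgroup.mem_map_of_mem _ hg

/-- The commutator of `x^{F(v_i)}` and `y^{F(v_j)}` is `[x, y]^{F(v_i ∨ v_j)}`, and `v_i ∨ v_j`
comes no earlier than `v_i` in colex order. -/
theorem upperFaceSubgroup_commutator_mem (hGf : IsFiltrationOfGroup Gf) (i j : Fin (2 ^ n))
    (a : (Fin n → Bool) → G) (ha : a ∈ upperFaceSubgroup Gf (vtxOf i))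
    (b : (Fin n → Bool) → G) (hb : b ∈ upperFaceSubgroup Gf (vtxOf j)) :
    ∃ k, i ≤ k ∧ a⁻¹ * b⁻¹ * a * b ∈ upperFaceSubgroup Gf (vtxOf k) := by
  obtain ⟨x, hx, rfl⟩ := mem_upperFaceSubgroup.1 ha
  obtain ⟨y, hy, rfl⟩ := mem_upperFaceSubgroup.1 hb
  obtain ⟨k, hk⟩ := vtxOf_bijective.2 (vtxOf i ⊔ vtxOf j)
  refine ⟨k, le_of_vtxOf_le (hk.symm ▸ le_sup_left), ?_⟩
  rw [faceEl_commutator, upperFaceSet_eq_Ici, upperFaceSet_eq_Ici, Set.Ici_inter_Ici, ← hk,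
    ← upperFaceSet_eq_Ici]
  exact faceEl_mem_upperFaceSubgroup
    (hGf.antitone (hk ▸ weight_sup_le _ _) (hGf.2 _ _ x hx y hy))

theorem hkCubes_eq_iSup_upperFaceSubgroup (hGf : Antitone Gf) :
    hkCubes Gf n = ⨆ j : Fin (2 ^ n), upperFaceSubgroup Gf (vtxOf j) := by
  refine le_antisymm ((Subgroup.closure_le _).2 ?_) (iSup_le fun j => ?_)
  · rintro _ ⟨c, F, g, ⟨I, x, rfl, rfl⟩, hg, rfl⟩
    refine faceEl_mem_of_upperFace_mem hGf (fun v g hg => ?_) I x hg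
    rw [← vtxOf_vtxEquiv_symm v] at hg ⊢
    exact Subgroup.mem_iSup_of_mem _ (faceEl_mem_upperFaceSubgroup hg)
  · intro q hq
    obtain ⟨g, hg, rfl⟩ := mem_upperFaceSubgroup.1 hq
    exact Subgroup.subset_closure ⟨_, _, g, upperFaceSet_isFaceOfCodim _, hg, rfl⟩

theorem mem_orderedProdSet_upperFaceSubgroup_iff (q : (Fin n → Bool) → G) :
    q ∈ orderedProdSet (fun j : Fin (2 ^ n) => upperFaceSubgroup Gf (vtxOf j)) ↔
      ∃ g : (Fin n → Bool) → G, (∀ v, g v ∈ Gf (weight v)) ∧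
        q = ((List.finRange (2 ^ n)).map
              fun j => faceEl (upperFaceSet (vtxOf j)) (g (vtxOf j))).prod := by
  constructor
  · rintro ⟨a, ha, rfl⟩
    choose f hf hfa using fun j => mem_upperFaceSubgroup.1 (ha j)
    have hf_vtx (j : Fin (2 ^ n)) : f (vtxEquiv.symm (vtxOf j)) = f j :=
      congrArg f (vtxEquiv.symm_apply_apply j)
    refine ⟨fun v => f (vtxEquiv.symm v), fun v => ?_, ?_⟩
    · simpa only [vtxOf_vtxEquiv_symm] using hf (vtxEquiv.symm v)
    · simp only [hf_vtx, hfa, List.ofFn_eq_map]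
  · rintro ⟨g, hg, rfl⟩
    exact ⟨_, fun j => faceEl_mem_upperFaceSubgroup (hg _), by rw [List.ofFn_eq_map]⟩

theorem eq_of_prod_upperFace_eq {g g' : (Fin n → Bool) → G}
    (h : ((List.finRange (2 ^ n)).map
            fun j => faceEl (upperFaceSet (vtxOf j)) (g (vtxOf j))).prod =
          ((List.finRange (2 ^ n)).map
            fun j => faceEl (upperFaceSet (vtxOf j)) (g' (vtxOf j))).prod) :
    g = g' := by
  have hvtx : (fun j => g (vtxOf j)) = fun j => g' (vtxOf j) :=
    list_prod_faceEl_injective (F := fun j => upperFaceSet (vtxOf j)) (x := vtxOf)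
      (fun j _ hi => hi)
      (fun j k hjk hjk' => not_le.2 hjk (le_of_vtxOf_le (by rwa [upperFaceSet_eq_Ici] at hjk')))
      (by simpa only [List.ofFn_eq_map] using h)
  funext v
  rw [← vtxOf_vtxEquiv_symm v]
  exact congrFun hvtx _

end CubeGroup

theorem stmt3 {G : Type*} [Group G] (Gf : ℕ → Subgroup G) (hGf : IsFiltrationOfGroup Gf)
    {n : ℕ} (q : (Fin n → Bool) → G) :
    q ∈ hkCubes Gf n ↔
      ∃! g : (Fin n → Bool) → G,
        (∀ v : Fin n → Bool, g v ∈ Gf (weight v)) ∧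
        q = ((List.finRange (2 ^ n)).map
              fun j => faceEl (upperFaceSet (vtxOf j)) (g (vtxOf j))).prod := by
  rw [← SetLike.mem_coe, hkCubes_eq_iSup_upperFaceSubgroup hGf.antitone,
    coe_iSup_eq_orderedProdSet _ (upperFaceSubgroup_commutator_mem hGf),
    mem_orderedProdSet_upperFaceSubgroup_iff]
  constructor
  · rintro ⟨g, hg, rfl⟩
    exact ⟨g, ⟨hg, rfl⟩, fun g' hg' => eq_of_prod_upperFace_eq hg'.2.symm⟩
  · exact fun ⟨g, hg, _⟩ => ⟨g, hg⟩
end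

section
/- Let (G, G_•) be a filtered group, q ∈ C^n(G_•), and φ: {0,1}^m → {0,1}^n a discrete-cube morphism. Then q ∘ φ ∈ C^m(G_•). -/
open Finset

/-- A (pre)filtration on a group: a decreasing chain of subgroups with
`[G_i, G_j] ⊆ G_{i+j}`. -/
def IsHKFiltration {G : Type*} [Group G] (Gf : ℕ → Subgroup G) : Prop :=
  (∀ i, Gf (i + 1) ≤ Gf i) ∧
  (∀ i j : ℕ, ∀ x ∈ Gf i, ∀ y ∈ Gf j, x⁻¹ * y⁻¹ * x * y ∈ Gf (i + j))

/-!
Precomposition with `φ` is a homomorphism, so it suffices to treat a generator `g^F` with `F` a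
face of codimension `c` and `g ∈ G_c`, for which `g^F ∘ φ = g^{φ⁻¹ F}`. A coordinate of a cube
morphism is an affine function `b + ∑_{j ∈ s} a_j` of the support `s` of `v` that only takes the
values `0` and `1`; it has at most one nonzero coefficient, since two of them would both have
the sign of `1 - 2b` and their sum would leave `{0, 1}`. So the coordinate is constant, `v_j` or
`¬v_j`. Hence preimages of coordinate hyperplanes are empty, everything or
coordinate hyperplanes, and the preimage of a face of codimension `c` is empty or a face of
codimension `c' ≤ c`. As the filtration decreases, `g ∈ G_c ≤ G_{c'}`.
-/

def IsEmptyOrFaceOfCodimLE {n : ℕ} (F : Set (Fin n → Bool)) (c : ℕ) : Prop :=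
  F = ∅ ∨ ∃ c' ≤ c, IsFaceOfCodim F c'

section Faces

variable {n : ℕ}

lemma isFaceOfCodim_univ (n : ℕ) : IsFaceOfCodim (Set.univ : Set (Fin n → Bool)) 0 :=
  ⟨∅, fun _ => false, rfl, by simp⟩

lemma isFaceOfCodim_setOf_apply_eq (j : Fin n) (b : Bool) :
    IsFaceOfCodim {v : Fin n → Bool | v j = b} 1 :=
  ⟨{j}, fun _ => b, rfl, by simp⟩

lemma IsFaceOfCodim.inter {F F' : Set (Fin n → Bool)} {c c' : ℕ} (hF : IsFaceOfCodim F c)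
    (hF' : IsFaceOfCodim F' c') : IsEmptyOrFaceOfCodimLE (F ∩ F') (c + c') := by
  classical
  obtain ⟨I, x, rfl, rfl⟩ := hF
  obtain ⟨J, y, rfl, rfl⟩ := hF'
  by_cases hxy : ∀ i ∈ I, i ∈ J → x i = y i
  · refine Or.inr ⟨(I ∪ J).card, card_union_le I J, I ∪ J,
      fun i => if i ∈ I then x i else y i, rfl, ?_⟩
    ext v
    simp only [Set.mem_inter_iff, Set.mem_ofPred_eq, mem_union]
    constructor
    · rintro ⟨hI, hJ⟩ i (hi | hi)
      · rw [if_pos hi, hI i hi]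
      · by_cases hiI : i ∈ I
        · rw [if_pos hiI, hI i hiI]
        · rw [if_neg hiI, hJ i hi]
    · intro h
      refine ⟨fun i hi => by simpa [hi] using h i (Or.inl hi), fun i hi => ?_⟩
      by_cases hiI : i ∈ I
      · have hv := h i (Or.inl hiI)
        rw [if_pos hiI] at hv
        rw [hv, hxy i hiI hi]
      · simpa [hiI] using h i (Or.inr hi)
  · push Not at hxy
    obtain ⟨i, hiI, hiJ, hne⟩ := hxy
    refine Or.inl (Set.eq_empty_of_forall_notMem fun v ⟨hI, hJ⟩ => ?_)
    exact hne ((hI i hiI).symm.trans (hJ i hiJ))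

lemma IsEmptyOrFaceOfCodimLE.inter {F F' : Set (Fin n → Bool)} {c c' : ℕ}
    (hF : IsEmptyOrFaceOfCodimLE F c) (hF' : IsEmptyOrFaceOfCodimLE F' c') :
    IsEmptyOrFaceOfCodimLE (F ∩ F') (c + c') := by
  rcases hF with rfl | ⟨d, hd, hF⟩
  · exact Or.inl (Set.empty_inter _)
  rcases hF' with rfl | ⟨d', hd', hF'⟩
  · exact Or.inl (Set.inter_empty _)
  rcases hF.inter hF' with h | ⟨e, he, h⟩
  · exact Or.inl h
  · exact Or.inr ⟨e, by omega, h⟩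

end Faces

lemma eq_const_or_eq_xor_of_affine {m : ℕ} {f : (Fin m → Bool) → Bool} (a : Fin m → ℤ) (b : ℤ)
    (hf : ∀ v, (if f v then 1 else 0 : ℤ) = ∑ j ∈ univ.filter (v · = true), a j + b) :
    (∃ c, ∀ v, f v = c) ∨ ∃ j e, ∀ v, f v = (v j ^^ e) := by
  classical
  have hsub : ∀ s : Finset (Fin m), ∑ j ∈ s, a j + b = 0 ∨ ∑ j ∈ s, a j + b = 1 := by
    intro s
    have hs := hf (fun j => decide (j ∈ s))
    simp only [decide_eq_true_eq, filter_mem_eq_inter, univ_inter] at hs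
    rw [← hs]
    split <;> simp
  have h0 := hf (fun _ => false)
  simp only [Bool.false_eq_true, filter_false, sum_empty, zero_add] at h0
  by_cases hall : ∀ j, a j = 0
  · refine Or.inl ⟨f (fun _ => false), fun v => ?_⟩
    have hv := hf v
    simp only [hall, sum_const_zero, zero_add] at hv
    have hv0 := hv.trans h0.symm
    cases hfv : f v <;> cases hf0 : f (fun _ => false) <;> simp [hfv, hf0] at hv0 ⊢
  push Not at hall
  obtain ⟨j₀, hj₀⟩ := hall
  have hb := hsub ∅
  have hj₀b := hsub {j₀}
  rw [sum_empty] at hb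
  rw [sum_singleton] at hj₀b
  have hothers : ∀ j ≠ j₀, a j = 0 := by
    intro j hj
    by_contra hja
    have hjb := hsub {j}
    have hpair := hsub {j₀, j}
    rw [sum_singleton] at hjb
    rw [sum_pair hj.symm] at hpair
    omega
  refine Or.inr ⟨j₀, f (fun _ => false), fun v => ?_⟩
  have hv := hf v
  have hsum : ∑ j ∈ univ.filter (v · = true), a j = if v j₀ then a j₀ else 0 := by
    split_ifs with h
    · exact sum_eq_single_of_mem j₀ (by simpa using h) fun j _ hj => hothers j hj
    · exact sum_eq_zero fun j hj => hothers j (by rintro rfl; simp_all)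
  rw [hsum] at hv
  cases hfv : f v <;> cases hf0 : f (fun _ => false) <;> cases hvj : v j₀ <;>
    simp only [hfv, hf0, hvj, Bool.false_eq_true, if_true, if_false, Bool.xor_false,
      Bool.xor_true, Bool.not_true, Bool.not_false, reduceCtorEq] at hv h0 ⊢ <;> omega

lemma cubeEmb_eq_sum {m : ℕ} (v : Fin m → Bool) :
    cubeEmb v = ∑ j ∈ univ.filter (fun j => v j = true), Pi.single j (1 : ℤ) := by
  funext i
  rw [Finset.sum_apply, Finset.sum_pi_single]
  simp [cubeEmb]

namespace IsCubeMorphism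

variable {m n : ℕ} {φ : (Fin m → Bool) → (Fin n → Bool)}

lemma coord_cases (hφ : IsCubeMorphism φ) (i : Fin n) :
    (∃ c, ∀ v, φ v i = c) ∨ ∃ j e, ∀ v, φ v i = (v j ^^ e) := by
  obtain ⟨M, t, hM⟩ := hφ
  refine eq_const_or_eq_xor_of_affine (fun j => M (Pi.single j 1) i) (t i) fun v => ?_
  have hv := congrFun (hM v) i
  rwa [Pi.add_apply, cubeEmb_eq_sum v, map_sum, Finset.sum_apply] at hv

lemma isEmptyOrFaceOfCodimLE_preimage_setOf_apply_eq (hφ : IsCubeMorphism φ) (i : Fin n)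
    (b : Bool) : IsEmptyOrFaceOfCodimLE {v | φ v i = b} 1 := by
  rcases hφ.coord_cases i with ⟨c, hc⟩ | ⟨j, e, he⟩
  · by_cases h : c = b
    · exact Or.inr ⟨0, zero_le_one, by simpa [hc, h] using isFaceOfCodim_univ m⟩
    · exact Or.inl (by ext v; simp [hc, h])
  · refine Or.inr ⟨1, le_rfl, ?_⟩
    convert isFaceOfCodim_setOf_apply_eq j (b ^^ e) using 1
    ext v
    cases v j <;> cases b <;> cases e <;> simp [*]

lemma isEmptyOrFaceOfCodimLE_preimage (hφ : IsCubeMorphism φ) {F : Set (Fin n → Bool)} {c : ℕ}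
    (hF : IsFaceOfCodim F c) : IsEmptyOrFaceOfCodimLE (φ ⁻¹' F) c := by
  obtain ⟨I, x, rfl, rfl⟩ := hF
  induction I using Finset.induction_on with
  | empty => exact Or.inr ⟨0, le_rfl, by simpa using isFaceOfCodim_univ m⟩
  | insert i I hi ih =>
    have hsplit : φ ⁻¹' {w | ∀ k ∈ insert i I, w k = x k} =
        {v | φ v i = x i} ∩ φ ⁻¹' {w | ∀ k ∈ I, w k = x k} := by
      ext v
      simp
    rw [hsplit, card_insert_of_notMem hi, add_comm]
    exact (hφ.isEmptyOrFaceOfCodimLE_preimage_setOf_apply_eq i (x i)).inter ih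

end IsCubeMorphism

lemma faceEl_empty {G : Type*} [Group G] {n : ℕ} (g : G) :
    faceEl (∅ : Set (Fin n → Bool)) g = 1 := by
  funext v
  simp [faceEl]

lemma faceEl_mem_hkCubes {G : Type*} [Group G] {Gf : ℕ → Subgroup G} (hGf : Antitone Gf)
    {n c : ℕ} {F : Set (Fin n → Bool)} (hF : IsEmptyOrFaceOfCodimLE F c) {g : G}
    (hg : g ∈ Gf c) : faceEl F g ∈ hkCubes Gf n := by
  rcases hF with rfl | ⟨c', hc', hF⟩
  · rw [faceEl_empty]
    exact one_mem _
  · exact Subgroup.subset_closure ⟨c', F, g, hF, hGf hc' hg, rfl⟩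

theorem stmt5 {G : Type*} [Group G] (Gf : ℕ → Subgroup G) (hGf : IsHKFiltration Gf)
    {m n : ℕ} (q : (Fin n → Bool) → G) (hq : q ∈ hkCubes Gf n)
    (φ : (Fin m → Bool) → (Fin n → Bool)) (hφ : IsCubeMorphism φ) :
    (q ∘ φ) ∈ hkCubes Gf m := by
  let precomp : ((Fin n → Bool) → G) →* ((Fin m → Bool) → G) :=
    MonoidHom.pi fun v => Pi.evalMonoidHom _ (φ v)
  suffices hkCubes Gf n ≤ (hkCubes Gf m).comap precomp from this hq
  rw [hkCubes, Subgroup.closure_le]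
  rintro _ ⟨c, F, g, hF, hg, rfl⟩
  exact faceEl_mem_hkCubes (antitone_nat_of_succ_le hGf.1)
    (hφ.isEmptyOrFaceOfCodimLE_preimage hF) hg
end

section
/- For any filtered groups (G, G_•) and (H, H_•), the set Poly(H_•, G_•) of polynomial maps H → G adapted to the filtrations is a group under pointwise multiplication (the Lazard–Leibman theorem). -/
open Finset

/-- A (pre)filtration on a group: a decreasing chain of subgroups with
`[G_i, G_j] ⊆ G_{i+j}`. -/
def IsGroupFiltration {G : Type*} [Group G] (Gf : ℕ → Subgroup G) : Prop :=
  (∀ i, Gf (i + 1) ≤ Gf i) ∧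
  (∀ i j : ℕ, ∀ x ∈ Gf i, ∀ y ∈ Gf j, x⁻¹ * y⁻¹ * x * y ∈ Gf (i + j))

/-! Let `P_n(a)` (`IsPolyUpTo Hf Gf n a`) be the set of maps all of whose derivatives
`∂_{h_1} ⋯ ∂_{h_m} f` of order `m ≤ n`, with `h_j ∈ H_{d_j}`, take values in `G_{a + Σ d_j}`.
By induction on `n`, each `P_n(a)` is closed under products and inverses, and
`⁅P_n(a), P_n(b)⁆ ⊆ P_n(a + b)`: a derivative of `f g`, `f⁻¹` or `⁅u, v⁆` is a product of
conjugates of commutators of the factors and their derivatives, which the case `n` controls, and a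
conjugate `g f g⁻¹ = ⁅g, f⁆ f` stays in the class of `f`. The order has to be truncated because a
term such as `⁅∂u, v⁆` is at first only known to lie in `P_n`, not to be polynomial. -/

open scoped commutatorElement

section LazardLeibman

variable {H G : Type*} [Group H] [Group G]

theorem IsGroupFiltration.antitone {Gf : ℕ → Subgroup G} (hGf : IsGroupFiltration Gf) :
    Antitone Gf :=
  antitone_nat_of_succ_le hGf.1

theorem IsGroupFiltration.commutatorElement_mem {Gf : ℕ → Subgroup G}
    (hGf : IsGroupFiltration Gf) {i j : ℕ} {x y : G} (hx : x ∈ Gf i) (hy : y ∈ Gf j) :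
    ⁅x, y⁆ ∈ Gf (i + j) := by
  simpa [commutatorElement_def] using hGf.2 i j _ (inv_mem hx) _ (inv_mem hy)

theorem mulDiff_one (h : H) : mulDiff h (1 : H → G) = 1 := by
  funext x
  simp [mulDiff]

theorem mulDiff_mul (h : H) (f g : H → G) :
    mulDiff h (f * g) = g⁻¹ * mulDiff h f * g * mulDiff h g := by
  funext x
  simp only [mulDiff, Pi.mul_apply, Pi.inv_apply]
  group

theorem mulDiff_inv (h : H) (f : H → G) :
    mulDiff h f⁻¹ = f * (mulDiff h f)⁻¹ * f⁻¹ := by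
  funext x
  simp only [mulDiff, Pi.mul_apply, Pi.inv_apply]
  group

theorem mulDiff_commutatorElement (h : H) (u v : H → G) :
    mulDiff h ⁅u, v⁆ =
      (⁅u, v⁆⁻¹ * u) * (⁅mulDiff h u, v⁆ * (v * ⁅mulDiff h u, mulDiff h v⁆ * v⁻¹)) *
        (⁅u, v⁆⁻¹ * u)⁻¹ * (v * ⁅u, mulDiff h v⁆ * v⁻¹) := by
  funext x
  simp only [mulDiff, Pi.mul_apply, Pi.inv_apply, commutatorElement_def]
  group

variable (Hf : ℕ → Subgroup H) (Gf : ℕ → Subgroup G)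

def DerivsMem : ℕ → ℕ → (H → G) → Prop
  | 0, a, f => ∀ x, f x ∈ Gf a
  | m + 1, a, f => ∀ e, ∀ h ∈ Hf e, DerivsMem m (a + e) (mulDiff h f)

def IsPolyUpTo (n a : ℕ) (f : H → G) : Prop :=
  ∀ m ≤ n, DerivsMem Hf Gf m a f

variable {Hf Gf}

theorem derivsMem_iff {m a : ℕ} {f : H → G} :
    DerivsMem Hf Gf m a f ↔ ∀ (d : Fin m → ℕ) (h : Fin m → H), (∀ j, h j ∈ Hf (d j)) →
      ∀ x, (List.ofFn h).foldr mulDiff f x ∈ Gf (a + ∑ j, d j) := by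
  induction m generalizing a f with
  | zero => simp [DerivsMem]
  | succ m ih =>
    simp only [DerivsMem, ih]
    constructor
    · intro hf d h hdh x
      have := hf (d (Fin.last m)) (h (Fin.last m)) (hdh _) (fun j => d j.castSucc)
        (fun j => h j.castSucc) (fun j => hdh _) x
      rw [List.ofFn_succ', List.concat_eq_append, List.foldr_concat, Fin.sum_univ_castSucc]
      rwa [add_assoc, add_comm (d _)] at this
    · intro hf e h₀ hh₀ d h hdh x
      have := hf (Fin.snoc d e) (Fin.snoc h h₀)
        (Fin.lastCases (by simpa using hh₀) (by simpa using hdh)) x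
      rw [List.ofFn_succ', List.concat_eq_append, List.foldr_concat, Fin.sum_univ_castSucc] at this
      simpa [add_assoc, add_comm e] using this

theorem isPolyMap_iff {f : H → G} : IsPolyMap Hf Gf f ↔ ∀ n, IsPolyUpTo Hf Gf n 0 f := by
  simp only [IsPolyMap, IsPolyUpTo, derivsMem_iff, zero_add]
  exact ⟨fun hf n m _ => hf m, fun hf m => hf m m le_rfl⟩

theorem DerivsMem.mono (hGf : Antitone Gf) {m a a' : ℕ} {f : H → G}
    (hf : DerivsMem Hf Gf m a f) (ha : a' ≤ a) : DerivsMem Hf Gf m a' f := by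
  induction m generalizing a a' f with
  | zero => exact fun x => hGf ha (hf x)
  | succ m ih => exact fun e h hh => ih (hf e h hh) (by omega)

theorem derivsMem_one (m a : ℕ) : DerivsMem Hf Gf m a (1 : H → G) := by
  induction m generalizing a with
  | zero => exact fun _ => one_mem _
  | succ m ih => exact fun e h _ => by rw [mulDiff_one]; exact ih _

namespace IsPolyUpTo

variable {n a : ℕ} {f : H → G}

theorem mono (hGf : Antitone Gf) (hf : IsPolyUpTo Hf Gf n a f) {a' : ℕ} (ha : a' ≤ a) :
    IsPolyUpTo Hf Gf n a' f :=
  fun m hm => (hf m hm).mono hGf ha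

theorem apply_mem (hf : IsPolyUpTo Hf Gf n a f) (x : H) : f x ∈ Gf a :=
  hf 0 n.zero_le x

theorem of_succ (hf : IsPolyUpTo Hf Gf (n + 1) a f) : IsPolyUpTo Hf Gf n a f :=
  fun m hm => hf m (hm.trans n.le_succ)

theorem mulDiff (hf : IsPolyUpTo Hf Gf (n + 1) a f) {e : ℕ} {h : H} (hh : h ∈ Hf e) :
    IsPolyUpTo Hf Gf n (a + e) (mulDiff h f) :=
  fun m hm => hf (m + 1) (by omega) e h hh

theorem succ (hf : ∀ x, f x ∈ Gf a)
    (hdf : ∀ e, ∀ h ∈ Hf e, IsPolyUpTo Hf Gf n (a + e) (_root_.mulDiff h f)) :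
    IsPolyUpTo Hf Gf (n + 1) a f
  | 0, _ => hf
  | m + 1, hm => fun e h hh => hdf e h hh m (by omega)

theorem zero (hf : ∀ x, f x ∈ Gf a) : IsPolyUpTo Hf Gf 0 a f
  | 0, _ => hf

theorem one : IsPolyUpTo Hf Gf n a (1 : H → G) :=
  fun m _ => derivsMem_one m a

variable (Hf Gf) in
structure Closed (n : ℕ) : Prop where
  mul {a : ℕ} {f g : H → G} :
    IsPolyUpTo Hf Gf n a f → IsPolyUpTo Hf Gf n a g → IsPolyUpTo Hf Gf n a (f * g)
  inv {a : ℕ} {f : H → G} : IsPolyUpTo Hf Gf n a f → IsPolyUpTo Hf Gf n a f⁻¹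
  commutatorElement {a b : ℕ} {f g : H → G} :
    IsPolyUpTo Hf Gf n a f → IsPolyUpTo Hf Gf n b g → IsPolyUpTo Hf Gf n (a + b) ⁅f, g⁆

namespace Closed

variable {b : ℕ} {g u v : H → G}

theorem zero (hGf : IsGroupFiltration Gf) : Closed Hf Gf 0 where
  mul hf hg := .zero fun x => mul_mem (hf.apply_mem x) (hg.apply_mem x)
  inv hf := .zero fun x => inv_mem (hf.apply_mem x)
  commutatorElement hf hg :=
    .zero fun x => hGf.commutatorElement_mem (hf.apply_mem x) (hg.apply_mem x)

theorem conj (ih : Closed Hf Gf n) (hGf : Antitone Gf) (hg : IsPolyUpTo Hf Gf n b g)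
    (hf : IsPolyUpTo Hf Gf n a f) : IsPolyUpTo Hf Gf n a (g * f * g⁻¹) := by
  rw [show g * f * g⁻¹ = ⁅g, f⁆ * f by group]
  exact ih.mul ((ih.commutatorElement hg hf).mono hGf (by omega)) hf

theorem mul_succ (ih : Closed Hf Gf n) (hGf : Antitone Gf) (hf : IsPolyUpTo Hf Gf (n + 1) a f)
    (hg : IsPolyUpTo Hf Gf (n + 1) a g) : IsPolyUpTo Hf Gf (n + 1) a (f * g) := by
  refine .succ (fun x => mul_mem (hf.apply_mem x) (hg.apply_mem x)) fun e h hh => ?_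
  have := ih.mul (ih.conj hGf (ih.inv hg.of_succ) (hf.mulDiff hh)) (hg.mulDiff hh)
  rwa [inv_inv, ← mulDiff_mul] at this

theorem inv_succ (ih : Closed Hf Gf n) (hGf : Antitone Gf) (hf : IsPolyUpTo Hf Gf (n + 1) a f) :
    IsPolyUpTo Hf Gf (n + 1) a f⁻¹ := by
  refine .succ (fun x => inv_mem (hf.apply_mem x)) fun e h hh => ?_
  rw [mulDiff_inv]
  exact ih.conj hGf hf.of_succ (ih.inv (hf.mulDiff hh))

theorem commutatorElement_succ (ih : Closed Hf Gf n) (hGf : IsGroupFiltration Gf)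
    (hu : IsPolyUpTo Hf Gf (n + 1) a u) (hv : IsPolyUpTo Hf Gf (n + 1) b v) :
    IsPolyUpTo Hf Gf (n + 1) (a + b) ⁅u, v⁆ := by
  refine .succ (fun x => hGf.commutatorElement_mem (hu.apply_mem x) (hv.apply_mem x))
    fun e h hh => ?_
  have hanti := hGf.antitone
  have hdu := hu.mulDiff hh
  have hdv := hv.mulDiff hh
  have hconj : IsPolyUpTo Hf Gf n a (⁅u, v⁆⁻¹ * u) :=
    ih.mul (ih.inv ((ih.commutatorElement hu.of_succ hv.of_succ).mono hanti (by omega))) hu.of_succ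
  rw [mulDiff_commutatorElement]
  refine ih.mul (ih.conj hanti hconj (ih.mul ?_ (ih.conj hanti hv.of_succ ?_)))
    (ih.conj hanti hv.of_succ ?_)
  · exact (ih.commutatorElement hdu hv.of_succ).mono hanti (by omega)
  · exact (ih.commutatorElement hdu hdv).mono hanti (by omega)
  · exact (ih.commutatorElement hu.of_succ hdv).mono hanti (by omega)

theorem succ (ih : Closed Hf Gf n) (hGf : IsGroupFiltration Gf) : Closed Hf Gf (n + 1) :=
  ⟨ih.mul_succ hGf.antitone, ih.inv_succ hGf.antitone, ih.commutatorElement_succ hGf⟩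

end Closed

theorem closed (hGf : IsGroupFiltration Gf) (n : ℕ) : Closed Hf Gf n := by
  induction n with
  | zero => exact .zero hGf
  | succ n ih => exact ih.succ hGf

end IsPolyUpTo

end LazardLeibman

theorem stmt8_general {H G : Type*} [Group H] [Group G] (Hf : ℕ → Subgroup H)
    (Gf : ℕ → Subgroup G) (hGf : IsGroupFiltration Gf) :
    IsPolyMap Hf Gf (fun _ => (1 : G)) ∧
    (∀ f g : H → G, IsPolyMap Hf Gf f → IsPolyMap Hf Gf g →
      IsPolyMap Hf Gf (fun x => f x * g x)) ∧
    (∀ f : H → G, IsPolyMap Hf Gf f → IsPolyMap Hf Gf (fun x => (f x)⁻¹)) := by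
  have hclosed := IsPolyUpTo.closed (Hf := Hf) hGf
  refine ⟨isPolyMap_iff.2 fun n => .one, fun f g hf hg => ?_, fun f hf => ?_⟩
  · exact isPolyMap_iff.2 fun n => (hclosed n).mul (isPolyMap_iff.1 hf n) (isPolyMap_iff.1 hg n)
  · exact isPolyMap_iff.2 fun n => (hclosed n).inv (isPolyMap_iff.1 hf n)

theorem stmt8 {H G : Type*} [Group H] [Group G] (Hf : ℕ → Subgroup H)
    (Gf : ℕ → Subgroup G) (hHf : IsGroupFiltration Hf) (hGf : IsGroupFiltration Gf) :
    IsPolyMap Hf Gf (fun _ => (1 : G)) ∧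
    (∀ f g : H → G, IsPolyMap Hf Gf f → IsPolyMap Hf Gf g →
      IsPolyMap Hf Gf (fun x => f x * g x)) ∧
    (∀ f : H → G, IsPolyMap Hf Gf f → IsPolyMap Hf Gf (fun x => (f x)⁻¹)) :=
  stmt8_general Hf Gf hGf
end
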